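/- arXiv:1406.6625 — 4 statements merged into one kernel-verified Lean document; each statement's English description precedes it below -/
import Mathlib

section
/- Let $\ell \in \mathbb{N}$, $\tau \in [0,1]$, and $\lambda > 0$ with $\lambda \ell \le 1/16$. If $T \sim \mathrm{Binomial}(\ell, \tau)$, then $\mathbb{E}[\exp(\lambda T(T-1))] \le \exp(16 \lambda \ell^2 \tau^2)$. -/
open Finset

lemma exp_aux {x τ : ℝ} (hτ0 : 0 ≤ τ) (hx0 : 0 ≤ x) (hx : x ≤ 3/8) :
    1 - τ + τ * Real.exp x ≤ Real.exp (2 * τ * x) := by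
  have h2 : Real.exp x ≤ 2 := by
    have hl : (3:ℝ)/8 ≤ Real.log 2 := by
      have := Real.log_two_gt_d9; linarith
    calc Real.exp x ≤ Real.exp (Real.log 2) := Real.exp_le_exp.2 (le_trans hx hl)
      _ = 2 := Real.exp_log (by norm_num)
  have h1 : Real.exp x - 1 ≤ x * Real.exp x := by
    have h := Real.add_one_le_exp (-x)
    rw [Real.exp_neg] at h
    have hp := Real.exp_pos x
    have h' := mul_le_mul_of_nonneg_right h hp.le
    rw [inv_mul_cancel₀ hp.ne'] at h'
    nlinarith
  have h3 : 1 - τ + τ * Real.exp x ≤ 1 + 2 * τ * x := by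
    nlinarith [mul_le_mul_of_nonneg_left h1 hτ0,
      mul_le_mul_of_nonneg_left (mul_le_mul_of_nonneg_left h2 hx0) hτ0]
  have h4 := Real.add_one_le_exp (2 * τ * x)
  linarith

lemma binom_step (n : ℕ) (τ : ℝ) (f : ℕ → ℝ) :
    ∑ t ∈ range (n+2), ((n+1).choose t : ℝ) * τ^t * (1-τ)^(n+1-t) * f t
    = ∑ s ∈ range (n+1), (n.choose s : ℝ) * τ^s * (1-τ)^(n-s) *
        ((1-τ) * f s + τ * f (s+1)) := by
  have hR : ∑ s ∈ range (n+1), (n.choose s : ℝ) * τ^s * (1-τ)^(n-s) *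
        ((1-τ) * f s + τ * f (s+1))
      = (∑ s ∈ range (n+1), (n.choose s : ℝ) * τ^s * (1-τ)^(n+1-s) * f s)
        + ∑ s ∈ range (n+1), (n.choose s : ℝ) * τ^(s+1) * (1-τ)^(n-s) * f (s+1) := by
    rw [← Finset.sum_add_distrib]
    apply Finset.sum_congr rfl
    intro s hs
    have hsn : s ≤ n := Nat.lt_succ_iff.mp (Finset.mem_range.mp hs)
    have h1 : n + 1 - s = (n - s) + 1 := by omega
    rw [h1, pow_succ]
    ring
  have hS1 : ∑ s ∈ range (n+1), (n.choose s : ℝ) * τ^s * (1-τ)^(n+1-s) * f s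
      = (∑ s ∈ range (n+1), (n.choose (s+1) : ℝ) * τ^(s+1) * (1-τ)^(n-s) * f (s+1))
        + (1-τ)^(n+1) * f 0 := by
    rw [Finset.sum_range_succ']
    congr 1
    · rw [Finset.sum_range_succ]
      simp only [Nat.choose_succ_self, Nat.cast_zero, zero_mul]
      rw [add_zero]
      apply Finset.sum_congr rfl
      intro s hs
      have hsn : s < n := Finset.mem_range.mp hs
      have h1 : n + 1 - (s + 1) = n - s := by omega
      rw [h1]
    · simp
  have hL : ∑ t ∈ range (n+2), ((n+1).choose t : ℝ) * τ^t * (1-τ)^(n+1-t) * f t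
      = (∑ s ∈ range (n+1), ((n+1).choose (s+1) : ℝ) * τ^(s+1) * (1-τ)^(n-s) * f (s+1))
        + (1-τ)^(n+1) * f 0 := by
    rw [Finset.sum_range_succ']
    congr 1
    · apply Finset.sum_congr rfl
      intro s hs
      have h1 : n + 1 - (s + 1) = n - s := by omega
      rw [h1]
    · simp
  rw [hL, hR, hS1]
  have hP : ∑ s ∈ range (n+1), ((n+1).choose (s+1) : ℝ) * τ^(s+1) * (1-τ)^(n-s) * f (s+1)
      = ∑ s ∈ range (n+1), ((n.choose s : ℝ) * τ^(s+1) * (1-τ)^(n-s) * f (s+1)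
          + (n.choose (s+1) : ℝ) * τ^(s+1) * (1-τ)^(n-s) * f (s+1)) := by
    apply Finset.sum_congr rfl
    intro s hs
    rw [Nat.choose_succ_succ]
    push_cast
    ring
  rw [hP, Finset.sum_add_distrib]
  ring

lemma key (τ lam : ℝ) (hτ0 : 0 ≤ τ) (hτ1 : τ ≤ 1) (hlam : 0 ≤ lam) :
    ∀ n : ℕ, ∀ μ : ℝ, 0 ≤ μ →
      μ + 2*lam*n + 4*lam*τ*n ≤ 3/8 →
      ∑ t ∈ range (n+1), ((n.choose t : ℝ) * τ^t * (1-τ)^(n-t)) *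
          Real.exp (lam * t * (t-1) + μ * t)
        ≤ Real.exp (2*τ*μ*n + 4*lam*τ^2*n*((n:ℝ)-1)) := by
  intro n
  induction n with
  | zero => intro μ hμ0 hcond; simp
  | succ m ih =>
    intro μ hμ0 hcond
    have hτ' : 0 ≤ 1 - τ := by linarith
    have hstep := binom_step m τ (fun t => Real.exp (lam * t * (t-1) + μ * t))
    have hLHS : ∑ t ∈ range (m+2), ((m+1).choose t : ℝ) * τ^t * (1-τ)^(m+1-t) *
          Real.exp (lam * t * (t-1) + μ * t)
        = ∑ s ∈ range (m+1), (m.choose s : ℝ) * τ^s * (1-τ)^(m-s) *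
          ((1-τ) * Real.exp (lam * s * (s-1) + μ * s)
            + τ * Real.exp (lam * (s+1:ℕ) * ((s+1:ℕ) - 1) + μ * (s+1:ℕ))) := hstep
    rw [hLHS]
    have hterm : ∀ s ∈ range (m+1),
        (m.choose s : ℝ) * τ^s * (1-τ)^(m-s) *
          ((1-τ) * Real.exp (lam * s * (s-1) + μ * s)
            + τ * Real.exp (lam * (s+1:ℕ) * ((s+1:ℕ) - 1) + μ * (s+1:ℕ)))
        ≤ Real.exp (2*τ*μ) * ((m.choose s : ℝ) * τ^s * (1-τ)^(m-s) *
            Real.exp (lam * s * (s-1) + (μ + 4*lam*τ) * s)) := by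
      intro s hs
      have hsm : (s:ℝ) ≤ m := by
        exact_mod_cast Nat.lt_succ_iff.mp (Finset.mem_range.mp hs)
      have hs0 : (0:ℝ) ≤ s := Nat.cast_nonneg s
      have hw : (0:ℝ) ≤ (m.choose s : ℝ) * τ^s * (1-τ)^(m-s) := by
        positivity
      set x : ℝ := 2*lam*s + μ with hxdef
      have hx0 : 0 ≤ x := by positivity
      have hxle : x ≤ 3/8 := by
        have hm : (m:ℝ) ≤ (m+1:ℕ) := by push_cast; linarith
        have h1 : 2*lam*(s:ℝ) ≤ 2*lam*((m:ℕ)+1:ℝ) := by nlinarith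
        have h2 : 0 ≤ 4*lam*τ*((m:ℕ)+1:ℝ) := by positivity
        push_cast at hcond ⊢
        nlinarith
      have hexp : Real.exp (lam * (s+1:ℕ) * ((s+1:ℕ) - 1) + μ * (s+1:ℕ))
          = Real.exp (lam * s * (s-1) + μ * s) * Real.exp x := by
        rw [← Real.exp_add]
        congr 1
        push_cast
        ring
      have hmid : (1-τ) * Real.exp (lam * s * (s-1) + μ * s)
            + τ * Real.exp (lam * (s+1:ℕ) * ((s+1:ℕ) - 1) + μ * (s+1:ℕ))
          ≤ Real.exp (lam * s * (s-1) + μ * s) * Real.exp (2*τ*x) := by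
        rw [hexp]
        have := exp_aux hτ0 hx0 hxle
        have hep := Real.exp_pos (lam * s * (s-1) + μ * s)
        nlinarith [Real.exp_pos x, Real.exp_pos (2*τ*x)]
      have heq : Real.exp (lam * s * (s-1) + μ * s) * Real.exp (2*τ*x)
          = Real.exp (2*τ*μ) * Real.exp (lam * s * (s-1) + (μ + 4*lam*τ) * s) := by
        rw [← Real.exp_add, ← Real.exp_add]
        congr 1
        rw [hxdef]
        ring
      calc (m.choose s : ℝ) * τ^s * (1-τ)^(m-s) *
          ((1-τ) * Real.exp (lam * s * (s-1) + μ * s)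
            + τ * Real.exp (lam * (s+1:ℕ) * ((s+1:ℕ) - 1) + μ * (s+1:ℕ)))
          ≤ (m.choose s : ℝ) * τ^s * (1-τ)^(m-s) *
            (Real.exp (lam * s * (s-1) + μ * s) * Real.exp (2*τ*x)) :=
            mul_le_mul_of_nonneg_left hmid hw
        _ = Real.exp (2*τ*μ) * ((m.choose s : ℝ) * τ^s * (1-τ)^(m-s) *
            Real.exp (lam * s * (s-1) + (μ + 4*lam*τ) * s)) := by rw [heq]; ring
    have hsum := Finset.sum_le_sum hterm
    rw [← Finset.mul_sum] at hsum
    have hμ'0 : 0 ≤ μ + 4*lam*τ := by positivity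
    have hcond' : (μ + 4*lam*τ) + 2*lam*m + 4*lam*τ*m ≤ 3/8 := by
      push_cast at hcond; nlinarith
    have hih := ih (μ + 4*lam*τ) hμ'0 hcond'
    have hfin : Real.exp (2*τ*μ) *
          (∑ s ∈ range (m+1), (m.choose s : ℝ) * τ^s * (1-τ)^(m-s) *
            Real.exp (lam * s * (s-1) + (μ + 4*lam*τ) * s))
        ≤ Real.exp (2*τ*μ) * Real.exp (2*τ*(μ + 4*lam*τ)*m + 4*lam*τ^2*m*((m:ℝ)-1)) :=
      mul_le_mul_of_nonneg_left hih (Real.exp_pos _).le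
    have hfinal : Real.exp (2*τ*μ) * Real.exp (2*τ*(μ + 4*lam*τ)*m + 4*lam*τ^2*m*((m:ℝ)-1))
        = Real.exp (2*τ*μ*((m+1:ℕ):ℝ) + 4*lam*τ^2*((m+1:ℕ):ℝ)*(((m+1:ℕ):ℝ)-1)) := by
      rw [← Real.exp_add]
      congr 1
      push_cast
      ring
    calc ∑ s ∈ range (m+1), (m.choose s : ℝ) * τ^s * (1-τ)^(m-s) *
          ((1-τ) * Real.exp (lam * s * (s-1) + μ * s)
            + τ * Real.exp (lam * (s+1:ℕ) * ((s+1:ℕ) - 1) + μ * (s+1:ℕ)))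
        ≤ Real.exp (2*τ*μ) *
          (∑ s ∈ range (m+1), (m.choose s : ℝ) * τ^s * (1-τ)^(m-s) *
            Real.exp (lam * s * (s-1) + (μ + 4*lam*τ) * s)) := hsum
      _ ≤ Real.exp (2*τ*μ) * Real.exp (2*τ*(μ + 4*lam*τ)*m + 4*lam*τ^2*m*((m:ℝ)-1)) := hfin
      _ = Real.exp (2*τ*μ*((m+1:ℕ):ℝ) + 4*lam*τ^2*((m+1:ℕ):ℝ)*(((m+1:ℕ):ℝ)-1)) := hfinal

/-- For `T ~ Binomial(ℓ, τ)` with `λℓ ≤ 1/16`,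
`E[exp(λ T(T-1))] ≤ exp(16 λ ℓ² τ²)`. -/
theorem stmt_3 (ℓ : ℕ) (τ lam : ℝ) (hτ0 : 0 ≤ τ) (hτ1 : τ ≤ 1)
    (hlam : 0 < lam) (hsmall : lam * ℓ ≤ 1 / 16) :
    ∑ t ∈ Finset.range (ℓ + 1),
        ((ℓ.choose t : ℝ) * τ ^ t * (1 - τ) ^ (ℓ - t)) *
          Real.exp (lam * t * (t - 1))
      ≤ Real.exp (16 * lam * ℓ ^ 2 * τ ^ 2) := by
  have hℓ0 : (0:ℝ) ≤ ℓ := Nat.cast_nonneg ℓ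
  have hcond : (0:ℝ) + 2*lam*ℓ + 4*lam*τ*ℓ ≤ 3/8 := by
    have h1 : lam*τ*ℓ ≤ lam*ℓ := by
      nlinarith [mul_nonneg (mul_nonneg hlam.le hℓ0) (sub_nonneg.2 hτ1)]
    nlinarith
  have hk := key τ lam hτ0 hτ1 hlam.le ℓ 0 le_rfl hcond
  have heq : ∑ t ∈ Finset.range (ℓ + 1),
        ((ℓ.choose t : ℝ) * τ ^ t * (1 - τ) ^ (ℓ - t)) *
          Real.exp (lam * t * (t - 1))
      = ∑ t ∈ range (ℓ+1), ((ℓ.choose t : ℝ) * τ^t * (1-τ)^(ℓ-t)) *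
          Real.exp (lam * t * (t-1) + 0 * t) := by
    apply Finset.sum_congr rfl
    intro t ht
    rw [zero_mul, add_zero]
  rw [heq]
  refine le_trans hk (Real.exp_le_exp.2 ?_)
  have h5 : 4*lam*τ^2*(ℓ:ℝ)*((ℓ:ℝ)-1) ≤ 4*lam*τ^2*(ℓ:ℝ)*(ℓ:ℝ) := by
    nlinarith [mul_nonneg (mul_nonneg hlam.le (sq_nonneg τ)) hℓ0]
  have h6 : (0:ℝ) ≤ lam * τ^2 * (ℓ:ℝ) * (ℓ:ℝ) :=
    mul_nonneg (mul_nonneg (mul_nonneg hlam.le (sq_nonneg τ)) hℓ0) hℓ0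
  nlinarith
end

section
/- Let $K \ge 1$, $k, \ell \ge 1$ with $K = k\ell$ and $k \ge 6e\ell$. Let $X \sim \mathrm{Binomial}(\lfloor 1.5K \rfloor, 1/k^2)$ and $Y \sim \mathrm{Binomial}(3\ell, e/k)$. Then for all integers $m$ with $1 \le m \le 2\ell - 1$, $\mathbb{P}[X = m] \le \mathbb{P}[Y = m]$, and moreover $\mathbb{P}[X \ge 2\ell] \le \mathbb{P}[Y = 2\ell]$. -/
open Finset

private lemma nat_pow_le_choose (n m : ℕ) (h : m ≤ n) : n ^ m ≤ m ^ m * n.choose m := by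
  have hfac : m.factorial = ∏ i ∈ range m, (m - i) := by
    rw [← Finset.prod_range_add_one_eq_factorial m,
      ← Finset.prod_range_reflect (fun i => i + 1) m]
    apply Finset.prod_congr rfl
    intro i hi
    simp only [Finset.mem_range] at hi
    omega
  have key : n ^ m * m.factorial ≤ m ^ m * n.descFactorial m := by
    have hn' : n ^ m = ∏ _i ∈ range m, n := by simp
    have hm' : m ^ m = ∏ _i ∈ range m, m := by simp
    rw [hfac, Nat.descFactorial_eq_prod_range, hn', hm', ← Finset.prod_mul_distrib,
      ← Finset.prod_mul_distrib]
    apply Finset.prod_le_prod'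
    intro i hi
    simp only [Finset.mem_range] at hi
    have hi' : i ≤ m := hi.le
    have hin : i ≤ n := hi'.trans h
    zify [hi', hin]
    nlinarith [mul_le_mul_of_nonneg_right (show (m:ℤ) ≤ n by exact_mod_cast h)
      (show (0:ℤ) ≤ i by positivity)]
  rw [Nat.descFactorial_eq_factorial_mul_choose] at key
  have hfp : 0 < m.factorial := Nat.factorial_pos m
  calc n ^ m = n ^ m * m.factorial / m.factorial := by
        rw [Nat.mul_div_cancel _ hfp]
    _ ≤ m ^ m * (m.factorial * n.choose m) / m.factorial := Nat.div_le_div_right key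
    _ = m ^ m * n.choose m := by
        rw [show m ^ m * (m.factorial * n.choose m) = m ^ m * n.choose m * m.factorial by ring,
          Nat.mul_div_cancel _ hfp]

private lemma real_pow_le_choose (n m : ℕ) (h : m ≤ n) :
    (n : ℝ) ^ m ≤ (m : ℝ) ^ m * (n.choose m : ℝ) := by
  exact_mod_cast Nat.cast_le.mpr (nat_pow_le_choose n m h)

private lemma choose_mul_le_real (n m : ℕ) :
    (n.choose m : ℝ) * (m : ℝ) ^ m ≤ (Real.exp 1 * n) ^ m := by
  have h1 : (n.choose m : ℝ) ≤ (n : ℝ) ^ m / (m.factorial : ℝ) := by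
    exact_mod_cast Nat.choose_le_pow_div m n
  have h2 : (m : ℝ) ^ m / (m.factorial : ℝ) ≤ Real.exp 1 ^ m := by
    have := Real.pow_div_factorial_le_exp (x := (m : ℝ)) (Nat.cast_nonneg m) m
    rwa [show Real.exp (m : ℝ) = Real.exp 1 ^ m by
      rw [← Real.exp_nat_mul]; norm_num] at this
  have hfp : (0 : ℝ) < (m.factorial : ℝ) := by exact_mod_cast Nat.factorial_pos m
  have h2' : (m : ℝ) ^ m ≤ Real.exp 1 ^ m * (m.factorial : ℝ) := by
    rw [div_le_iff₀ hfp] at h2; linarith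
  calc (n.choose m : ℝ) * (m : ℝ) ^ m
      ≤ ((n : ℝ) ^ m / (m.factorial : ℝ)) * (Real.exp 1 ^ m * (m.factorial : ℝ)) := by
        apply mul_le_mul h1 h2' (by positivity) (by positivity)
    _ = (n : ℝ) ^ m * Real.exp 1 ^ m := by field_simp
    _ = (Real.exp 1 * n) ^ m := by rw [mul_pow]; ring

set_option maxHeartbeats 1000000 in
/-- Comparison of binomial point masses: `X ~ Binomial(⌊1.5K⌋, 1/k²)` and
`Y ~ Binomial(3ℓ, e/k)` with `K = kℓ` and `k ≥ 6eℓ`. Then `P[X=m] ≤ P[Y=m]`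
for `1 ≤ m ≤ 2ℓ-1`, and `P[X ≥ 2ℓ] ≤ P[Y = 2ℓ]`. -/
theorem stmt_5 (K k ℓ : ℕ) (hK : 1 ≤ K) (hk : 1 ≤ k) (hℓ : 1 ≤ ℓ)
    (hKkl : K = k * ℓ) (hke : (6 : ℝ) * Real.exp 1 * ℓ ≤ k)
    (n₁ : ℕ) (hn₁ : n₁ = 3 * K / 2)
    (pX pY : ℕ → ℝ)
    (hpX : ∀ m, pX m = (n₁.choose m : ℝ) * (1 / (k : ℝ) ^ 2) ^ m *
        (1 - 1 / (k : ℝ) ^ 2) ^ (n₁ - m))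
    (hpY : ∀ m, pY m = ((3 * ℓ).choose m : ℝ) * (Real.exp 1 / k) ^ m *
        (1 - Real.exp 1 / k) ^ (3 * ℓ - m)) :
    (∀ m, 1 ≤ m → m ≤ 2 * ℓ - 1 → pX m ≤ pY m) ∧
      ∑ m ∈ Finset.Icc (2 * ℓ) n₁, pX m ≤ pY (2 * ℓ) := by
  set e : ℝ := Real.exp 1 with hedef
  have he2 : (2 : ℝ) ≤ e := by
    have := Real.add_one_le_exp (1 : ℝ); linarith
  have hl1 : (1 : ℝ) ≤ (ℓ : ℝ) := by exact_mod_cast hℓ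
  have hlpos : (0 : ℝ) < (ℓ : ℝ) := by linarith
  have hkR : (12 : ℝ) ≤ (k : ℝ) := by nlinarith
  have hkpos : (0 : ℝ) < (k : ℝ) := by linarith
  -- e/k ≤ 1/(6ℓ)
  have hek : e / k ≤ 1 / (6 * (ℓ : ℝ)) := by
    rw [div_le_div_iff₀ hkpos (by positivity)]
    nlinarith
  have hek6 : e / k ≤ 1 / 6 := by
    apply hek.trans
    rw [div_le_div_iff₀ (by positivity) (by norm_num)]
    nlinarith
  have h1ek0 : (0 : ℝ) ≤ 1 - e / k := by linarith
  have h1ek1 : 1 - e / k ≤ 1 := by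
    have : (0 : ℝ) ≤ e / k := by positivity
    linarith
  -- (1 - e/k)^(3ℓ) ≥ 1/2
  have half : (1 / 2 : ℝ) ≤ (1 - e / k) ^ (3 * ℓ) := by
    have hpow := one_add_mul_le_pow (a := -(e / k)) (by linarith) (3 * ℓ)
    have hmul : (3 * (ℓ : ℝ)) * (e / k) ≤ 1 / 2 := by
      have h := mul_le_mul_of_nonneg_left hek (show (0:ℝ) ≤ 3 * (ℓ:ℝ) by positivity)
      have heq : (3 * (ℓ : ℝ)) * (1 / (6 * ℓ)) = 1 / 2 := by
        field_simp
        ring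
      linarith [heq ▸ h]
    have hcast : ((3 * ℓ : ℕ) : ℝ) = 3 * (ℓ : ℝ) := by push_cast; ring
    rw [show (1 : ℝ) + -(e / k) = 1 - e / k by ring] at hpow
    rw [hcast] at hpow
    linarith
  -- n₁ ≤ 3kℓ/2 as reals
  have hn₁le : (n₁ : ℝ) ≤ 3 * k * ℓ / 2 := by
    rw [hn₁]
    calc ((3 * K / 2 : ℕ) : ℝ) ≤ ((3 * K : ℕ) : ℝ) / ((2 : ℕ) : ℝ) := Nat.cast_div_le
      _ = 3 * k * ℓ / 2 := by rw [hKkl]; push_cast; ring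
  -- L1 : pX m ≤ (3ℓe/(2mk))^m for m ≥ 1
  have hL1 : ∀ m : ℕ, 1 ≤ m → pX m ≤ (3 * (ℓ : ℝ) * e / (2 * m * k)) ^ m := by
    intro m hm
    have hm0 : (0 : ℝ) < (m : ℝ) := by exact_mod_cast hm
    rw [hpX m]
    have hb1 : (1 - 1 / (k : ℝ) ^ 2) ^ (n₁ - m) ≤ 1 := by
      apply pow_le_one₀
      · have : 1 / (k : ℝ) ^ 2 ≤ 1 := by
          rw [div_le_one (by positivity)]; nlinarith
        linarith
      · have : (0 : ℝ) ≤ 1 / (k : ℝ) ^ 2 := by positivity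
        linarith
    have hC : (n₁.choose m : ℝ) ≤ (e * (3 * k * ℓ / 2) / m) ^ m := by
      rw [div_pow, le_div_iff₀ (by positivity)]
      calc (n₁.choose m : ℝ) * (m : ℝ) ^ m ≤ (e * n₁) ^ m := choose_mul_le_real n₁ m
        _ ≤ (e * (3 * k * ℓ / 2)) ^ m := by
            apply pow_le_pow_left₀ (by positivity)
            nlinarith
    calc (n₁.choose m : ℝ) * (1 / (k : ℝ) ^ 2) ^ m * (1 - 1 / (k : ℝ) ^ 2) ^ (n₁ - m)
        ≤ (n₁.choose m : ℝ) * (1 / (k : ℝ) ^ 2) ^ m * 1 := by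
          apply mul_le_mul_of_nonneg_left hb1 (by positivity)
      _ = (n₁.choose m : ℝ) * (1 / (k : ℝ) ^ 2) ^ m := by ring
      _ ≤ (e * (3 * k * ℓ / 2) / m) ^ m * (1 / (k : ℝ) ^ 2) ^ m := by
          apply mul_le_mul_of_nonneg_right hC (by positivity)
      _ = ((e * (3 * k * ℓ / 2) / m) * (1 / (k : ℝ) ^ 2)) ^ m := by rw [← mul_pow]
      _ = (3 * (ℓ : ℝ) * e / (2 * m * k)) ^ m := by
          congr 1
          field_simp
  -- L2 : (1/2) * (3ℓe/(mk))^m ≤ pY m for 1 ≤ m ≤ 3ℓ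
  have hL2 : ∀ m : ℕ, 1 ≤ m → m ≤ 3 * ℓ →
      (1 / 2 : ℝ) * (3 * (ℓ : ℝ) * e / (m * k)) ^ m ≤ pY m := by
    intro m hm hm3
    have hm0 : (0 : ℝ) < (m : ℝ) := by exact_mod_cast hm
    rw [hpY m]
    have hCh : (3 * (ℓ : ℝ) / m) ^ m ≤ ((3 * ℓ).choose m : ℝ) := by
      rw [div_pow, div_le_iff₀ (by positivity)]
      have := real_pow_le_choose (3 * ℓ) m hm3
      calc (3 * (ℓ : ℝ)) ^ m = ((3 * ℓ : ℕ) : ℝ) ^ m := by push_cast; ring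
        _ ≤ (m : ℝ) ^ m * ((3 * ℓ).choose m : ℝ) := this
        _ = ((3 * ℓ).choose m : ℝ) * (m : ℝ) ^ m := by ring
    have htail : (1 / 2 : ℝ) ≤ (1 - e / k) ^ (3 * ℓ - m) := by
      calc (1 / 2 : ℝ) ≤ (1 - e / k) ^ (3 * ℓ) := half
        _ ≤ (1 - e / k) ^ (3 * ℓ - m) :=
            pow_le_pow_of_le_one h1ek0 h1ek1 (Nat.sub_le _ _)
    calc (1 / 2 : ℝ) * (3 * (ℓ : ℝ) * e / (m * k)) ^ m
        = (3 * (ℓ : ℝ) / m) ^ m * (e / k) ^ m * (1 / 2) := by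
          have hb : (3 * (ℓ : ℝ) / m) * (e / k) = 3 * ℓ * e / (m * k) := by ring
          rw [← mul_pow, hb]
          ring
      _ ≤ ((3 * ℓ).choose m : ℝ) * (e / k) ^ m * ((1 - e / k) ^ (3 * ℓ - m)) := by
          apply mul_le_mul
          · exact mul_le_mul_of_nonneg_right hCh (by positivity)
          · exact htail
          · norm_num
          · positivity
  constructor
  · -- Part 1
    intro m hm1 hm2
    have hm3 : m ≤ 3 * ℓ := by omega
    have hX := hL1 m hm1
    have hY := hL2 m hm1 hm3
    have hm0 : (0 : ℝ) < (m : ℝ) := by exact_mod_cast hm1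
    have hbase : (0 : ℝ) ≤ 3 * (ℓ : ℝ) * e / (m * k) := by positivity
    have heq : (3 * (ℓ : ℝ) * e / (2 * m * k)) ^ m
        = (1 / 2 : ℝ) ^ m * (3 * (ℓ : ℝ) * e / (m * k)) ^ m := by
      rw [← mul_pow]
      congr 1
      field_simp
    have hhalfpow : (1 / 2 : ℝ) ^ m ≤ 1 / 2 := by
      calc (1 / 2 : ℝ) ^ m ≤ (1 / 2 : ℝ) ^ 1 :=
            pow_le_pow_of_le_one (by norm_num) (by norm_num) hm1
        _ = 1 / 2 := pow_one _
    calc pX m ≤ (3 * (ℓ : ℝ) * e / (2 * m * k)) ^ m := hX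
      _ = (1 / 2 : ℝ) ^ m * (3 * (ℓ : ℝ) * e / (m * k)) ^ m := heq
      _ ≤ (1 / 2 : ℝ) * (3 * (ℓ : ℝ) * e / (m * k)) ^ m :=
          mul_le_mul_of_nonneg_right hhalfpow (by positivity)
      _ ≤ pY m := hY
  · -- Part 2
    set r : ℝ := 3 * e / (4 * k) with hrdef
    have hr0 : (0 : ℝ) < r := by positivity
    have hr8 : r ≤ 1 / 8 := by
      rw [hrdef, div_le_div_iff₀ (by positivity) (by norm_num)]
      nlinarith
    -- termwise bound
    have hterm : ∀ m ∈ Finset.Icc (2 * ℓ) n₁, pX m ≤ r ^ m := by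
      intro m hmem
      rw [Finset.mem_Icc] at hmem
      have hm1 : 1 ≤ m := by omega
      have hm0 : (0 : ℝ) < (m : ℝ) := by exact_mod_cast hm1
      have h2lm : (2 * (ℓ : ℝ)) ≤ (m : ℝ) := by exact_mod_cast hmem.1
      have hbase : 3 * (ℓ : ℝ) * e / (2 * m * k) ≤ r := by
        rw [hrdef, div_le_div_iff₀ (by positivity) (by positivity)]
        nlinarith [mul_le_mul_of_nonneg_right h2lm (show (0:ℝ) ≤ 6 * e * k by positivity)]
      calc pX m ≤ (3 * (ℓ : ℝ) * e / (2 * m * k)) ^ m := hL1 m hm1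
        _ ≤ r ^ m := pow_le_pow_left₀ (by positivity) hbase m
    -- geometric sum bound
    have hgeom : ∑ m ∈ Finset.Icc (2 * ℓ) n₁, r ^ m ≤ 2 * r ^ (2 * ℓ) := by
      by_cases hcase : 2 * ℓ ≤ n₁
      · rw [← Finset.Ico_add_one_right_eq_Icc, Finset.sum_Ico_eq_sum_range]
        have hsum : ∀ N : ℕ, ∑ i ∈ Finset.range N, r ^ i ≤ 2 := by
          intro N
          have hne : r ≠ 1 := by linarith
          rw [geom_sum_eq hne]
          rw [div_le_iff_of_neg (by linarith : r - 1 < 0)]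
          have : (0:ℝ) ≤ r ^ N := by positivity
          nlinarith
        calc ∑ i ∈ Finset.range (n₁ + 1 - 2 * ℓ), r ^ (2 * ℓ + i)
            = r ^ (2 * ℓ) * ∑ i ∈ Finset.range (n₁ + 1 - 2 * ℓ), r ^ i := by
              rw [Finset.mul_sum]
              apply Finset.sum_congr rfl
              intro i _
              rw [pow_add]
          _ ≤ r ^ (2 * ℓ) * 2 :=
              mul_le_mul_of_nonneg_left (hsum _) (by positivity)
          _ = 2 * r ^ (2 * ℓ) := by ring
      · rw [Finset.Icc_eq_empty (by omega)]
        simp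
        positivity
    -- lower bound for pY (2ℓ)
    have h2l1 : 1 ≤ 2 * ℓ := by omega
    have hY := hL2 (2 * ℓ) h2l1 (by omega)
    have hbase_eq : 3 * (ℓ : ℝ) * e / (((2 * ℓ : ℕ) : ℝ) * k) = 2 * r := by
      push_cast
      rw [hrdef]
      field_simp
      ring
    rw [hbase_eq] at hY
    have hfour : (4 : ℝ) ≤ 2 ^ (2 * ℓ) := by
      calc (4 : ℝ) = 2 ^ 2 := by norm_num
        _ ≤ (2 : ℝ) ^ (2 * ℓ) := pow_le_pow_right₀ (by norm_num) (by omega)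
    have hrpow : (0 : ℝ) ≤ r ^ (2 * ℓ) := by positivity
    calc ∑ m ∈ Finset.Icc (2 * ℓ) n₁, pX m
        ≤ ∑ m ∈ Finset.Icc (2 * ℓ) n₁, r ^ m := Finset.sum_le_sum hterm
      _ ≤ 2 * r ^ (2 * ℓ) := hgeom
      _ ≤ (1 / 2) * (2 * r) ^ (2 * ℓ) := by
          rw [mul_pow]
          nlinarith
      _ ≤ pY (2 * ℓ) := hY
end

section
/- Let $p = 2q$ with $16 q \ell^2 \le 1$, let $\gamma \in (0,1/2]$, $m_0 = \lfloor\log_2(1/\gamma)\rfloor$, and let $\ell_s, \ell_t \le 2\ell$ be positive integers. Let $P = \mathrm{Binomial}(\ell_s\ell_t, p)$, $Q = \mathrm{Binomial}(\ell_s\ell_t, q)$. Define $P'(m) = P(m) + a$ for $m=0$, $P'(m) = P(m)$ for $1 \le m \le m_0$, and $P'(m) = \frac{1}{\gamma}Q(m)$ for $m_0 < m \le \ell_s\ell_t$, where $a = \sum_{m_0 < m \le \ell_s\ell_t}[P(m) - \frac1\gamma Q(m)]$; define $Q' = \frac{1}{1-\gamma}(Q - \gamma P')$. Then $P'$ and $Q'$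 are probability mass functions, and $d_{TV}(P', P) \le 4(8q\ell^2)^{m_0+1}$. -/
/-!
Put `X = 8qℓ² ≤ 1/2`. Since `n ≤ 4ℓ²`, the crude bound `Binomial(n, x)(m) ≤ (n x)^m` makes the tails
`∑_{m > m₀} P m` and `∑_{m > m₀} Q m / γ` at most `2 X^{m₀+1}` each, using `1/γ < 2^{m₀+1}` for the
second; together they bound the total variation. `P' 0 ≥ 0` because `P 0 ≥ 1 - X` and `m₀ ≥ 1`.
`Q - γ P' ≥ 0` holds for `1 ≤ m ≤ m₀` since `γ P m ≤ γ 2^m Q m ≤ Q m` by `2^{m₀} ≤ 1/γ`, trivially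
above `m₀`, and at `0` since `P' 0 ≤ P 0 + ∑_{m > m₀} P m ≤ 1`
and `γ ≤ 1/2 ≤ Q 0`.
-/

open Finset

section ReplaceTail

variable (P Q : ℕ → ℝ) (γ : ℝ) (m₀ n : ℕ)

noncomputable def replaceTail (m : ℕ) : ℝ :=
  if m = 0 then P 0 + ∑ k ∈ Ico (m₀ + 1) (n + 1), (P k - Q k / γ)
  else if m ≤ m₀ then P m else Q m / γ

lemma replaceTail_zero :
    replaceTail P Q γ m₀ n 0 = P 0 + ∑ k ∈ Ico (m₀ + 1) (n + 1), (P k - Q k / γ) := rfl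

lemma replaceTail_of_le {m : ℕ} (h1 : 1 ≤ m) (h2 : m ≤ m₀) : replaceTail P Q γ m₀ n m = P m := by
  simp [replaceTail, h2, Nat.one_le_iff_ne_zero.mp h1]

lemma replaceTail_of_lt {m : ℕ} (h : m₀ < m) : replaceTail P Q γ m₀ n m = Q m / γ := by
  simp [replaceTail, h.not_ge, (Nat.zero_le m₀).trans_lt h |>.ne']

lemma sum_range_eq_add_sum_Ico_of_eq_zero (f : ℕ → ℝ) (hf : ∀ m, 1 ≤ m → m ≤ m₀ → f m = 0) :
    ∑ m ∈ range (n + 1), f m = f 0 + ∑ m ∈ Ico (m₀ + 1) (n + 1), f m := by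
  rw [sum_range_eq_add_Ico f n.succ_pos]
  refine congrArg _ (sum_subset (Ico_subset_Ico_left (by omega)) fun m hm hm' => ?_).symm
  simp only [mem_Ico, not_and, not_lt] at hm hm'
  exact hf m hm.1 (by omega)

lemma sum_replaceTail :
    ∑ m ∈ range (n + 1), replaceTail P Q γ m₀ n m = ∑ m ∈ range (n + 1), P m := by
  rw [← sub_eq_zero, ← sum_sub_distrib,
    sum_range_eq_add_sum_Ico_of_eq_zero m₀ n _ fun m h1 h2 => by
      rw [replaceTail_of_le P Q γ m₀ n h1 h2, sub_self],
    sum_congr rfl fun m hm => by rw [replaceTail_of_lt P Q γ m₀ n (mem_Ico.mp hm).1],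
    replaceTail_zero, add_sub_cancel_left, ← sum_add_distrib]
  exact sum_eq_zero fun m _ => by ring

lemma sum_abs_replaceTail_sub_le :
    ∑ m ∈ range (n + 1), |replaceTail P Q γ m₀ n m - P m|
      ≤ 2 * ∑ m ∈ Ico (m₀ + 1) (n + 1), |P m - Q m / γ| := by
  rw [sum_range_eq_add_sum_Ico_of_eq_zero m₀ n _ fun m h1 h2 => by
      rw [replaceTail_of_le P Q γ m₀ n h1 h2, sub_self, abs_zero],
    sum_congr rfl fun m hm => by
      rw [replaceTail_of_lt P Q γ m₀ n (mem_Ico.mp hm).1, abs_sub_comm],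
    replaceTail_zero, add_sub_cancel_left, two_mul]
  exact (add_le_add_iff_right _).2 (abs_sum_le_sum_abs _ _)

variable {P Q γ}

lemma sum_abs_replaceTail_sub_le_of_nonneg (hP : ∀ m, 0 ≤ P m) (hQ : ∀ m, 0 ≤ Q m) (hγ : 0 ≤ γ) :
    ∑ m ∈ range (n + 1), |replaceTail P Q γ m₀ n m - P m|
      ≤ 2 * (∑ m ∈ Ico (m₀ + 1) (n + 1), P m + ∑ m ∈ Ico (m₀ + 1) (n + 1), Q m / γ) := by
  rw [← sum_add_distrib]
  refine (sum_abs_replaceTail_sub_le P Q γ m₀ n).trans ?_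
  gcongr with m
  refine (abs_sub _ _).trans_eq ?_
  rw [abs_of_nonneg (hP m), abs_of_nonneg (div_nonneg (hQ m) hγ)]

lemma replaceTail_nonneg (hP : ∀ m, 0 ≤ P m) (hQ : ∀ m, 0 ≤ Q m) (hγ : 0 ≤ γ)
    (h0 : ∑ m ∈ Ico (m₀ + 1) (n + 1), Q m / γ ≤ P 0) (m : ℕ) :
    0 ≤ replaceTail P Q γ m₀ n m := by
  unfold replaceTail
  split_ifs
  · have := sum_nonneg fun k (_ : k ∈ Ico (m₀ + 1) (n + 1)) => hP k
    rw [sum_sub_distrib]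
    linarith
  · exact hP m
  · exact div_nonneg (hQ m) hγ

lemma mul_replaceTail_le (hP : ∀ m, 0 ≤ P m) (hP1 : ∑ m ∈ range (n + 1), P m = 1)
    (hQ : ∀ m, 0 ≤ Q m) (hγ : 0 < γ) (h0 : γ ≤ Q 0)
    (hmid : ∀ m, 1 ≤ m → m ≤ m₀ → γ * P m ≤ Q m) (m : ℕ) :
    γ * replaceTail P Q γ m₀ n m ≤ Q m := by
  rcases Nat.eq_zero_or_pos m with rfl | hm
  · have htail : P 0 + ∑ k ∈ Ico (m₀ + 1) (n + 1), P k ≤ 1 := by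
      rw [← hP1, sum_range_eq_add_Ico P n.succ_pos]
      exact (add_le_add_iff_left _).2 (sum_le_sum_of_subset_of_nonneg
        (Ico_subset_Ico_left m₀.succ_pos) fun k _ _ => hP k)
    have hQtail := sum_nonneg fun k (_ : k ∈ Ico (m₀ + 1) (n + 1)) => div_nonneg (hQ k) hγ.le
    rw [replaceTail_zero, sum_sub_distrib]
    nlinarith
  rcases le_or_gt m m₀ with hle | hlt
  · rw [replaceTail_of_le P Q γ m₀ n hm hle]
    exact hmid m hm hle
  · rw [replaceTail_of_lt P Q γ m₀ n hlt, mul_div_cancel₀ _ hγ.ne']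

end ReplaceTail

noncomputable def binomialMass (n : ℕ) (x : ℝ) (m : ℕ) : ℝ :=
  n.choose m * x ^ m * (1 - x) ^ (n - m)

lemma sum_Ico_le_two_mul_pow {f : ℕ → ℝ} {y : ℝ} (hf : ∀ m, f m ≤ y ^ m) (hy0 : 0 ≤ y)
    (hy : y ≤ 1 / 2) (k K : ℕ) : ∑ m ∈ Ico k K, f m ≤ 2 * y ^ k :=
  calc ∑ m ∈ Ico k K, f m ≤ ∑ m ∈ Ico k K, y ^ m := sum_le_sum fun m _ => hf m
    _ ≤ y ^ k / (1 - y) := geom_sum_Ico_le_of_lt_one hy0 (by linarith)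
    _ ≤ 2 * y ^ k := by
        rw [div_le_iff₀ (by linarith)]
        nlinarith [pow_nonneg hy0 k]

section Binomial

variable (n : ℕ) {x : ℝ}

lemma binomialMass_nonneg (hx0 : 0 ≤ x) (hx1 : x ≤ 1) (m : ℕ) : 0 ≤ binomialMass n x m := by
  have : 0 ≤ 1 - x := by linarith
  unfold binomialMass
  positivity

lemma sum_binomialMass (x : ℝ) : ∑ m ∈ range (n + 1), binomialMass n x m = 1 := by
  have h := add_pow x (1 - x) n
  rw [add_sub_cancel, one_pow] at h
  rw [h]
  exact sum_congr rfl fun m _ => by unfold binomialMass; ring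

lemma binomialMass_le_pow (hx0 : 0 ≤ x) (hx1 : x ≤ 1) (m : ℕ) :
    binomialMass n x m ≤ (n * x) ^ m := by
  have hchoose : (n.choose m : ℝ) ≤ (n : ℝ) ^ m := by exact_mod_cast n.choose_le_pow m
  calc binomialMass n x m ≤ (n : ℝ) ^ m * x ^ m * 1 := by
        unfold binomialMass
        gcongr
        exact pow_le_one₀ (by linarith) (by linarith)
    _ = (n * x) ^ m := by rw [mul_one, mul_pow]

lemma binomialMass_two_mul_le (hx0 : 0 ≤ x) (hx : 2 * x ≤ 1) (m : ℕ) :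
    binomialMass n (2 * x) m ≤ 2 ^ m * binomialMass n x m := by
  calc binomialMass n (2 * x) m ≤ n.choose m * (2 * x) ^ m * (1 - x) ^ (n - m) := by
        unfold binomialMass
        gcongr
        linarith
    _ = 2 ^ m * binomialMass n x m := by unfold binomialMass; rw [mul_pow]; ring

lemma one_sub_mul_le_binomialMass_zero (hx : x ≤ 2) : 1 - n * x ≤ binomialMass n x 0 := by
  simpa [binomialMass, sub_eq_add_neg] using one_add_mul_le_pow (by linarith : -2 ≤ -x) n

lemma sum_Ico_binomialMass_le (hx0 : 0 ≤ x) (hx1 : x ≤ 1) (hnx : n * x ≤ 1 / 2) (k K : ℕ) :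
    ∑ m ∈ Ico k K, binomialMass n x m ≤ 2 * (n * x) ^ k :=
  sum_Ico_le_two_mul_pow (binomialMass_le_pow n hx0 hx1) (by positivity) hnx k K

lemma sum_Ico_binomialMass_div_le {γ : ℝ} {k : ℕ} (hx0 : 0 ≤ x) (hx1 : x ≤ 1)
    (hnx : 2 * n * x ≤ 1) (hγ0 : 0 < γ) (hγ : 1 / γ ≤ 2 ^ k) (K : ℕ) :
    ∑ m ∈ Ico k K, binomialMass n x m / γ ≤ 2 * (2 * n * x) ^ k := by
  rw [← sum_div, div_eq_mul_one_div]
  calc _ ≤ 2 * ((n : ℝ) * x) ^ k * 2 ^ k := by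
        gcongr
        exact sum_Ico_binomialMass_le n hx0 hx1 (by linarith) _ _
    _ = 2 * (2 * n * x) ^ k := by ring

lemma mul_binomialMass_two_mul_le {γ : ℝ} {m : ℕ} (hx0 : 0 ≤ x) (hx : 2 * x ≤ 1) (hγ0 : 0 < γ)
    (hγ : 2 ^ m ≤ 1 / γ) : γ * binomialMass n (2 * x) m ≤ binomialMass n x m :=
  calc γ * binomialMass n (2 * x) m ≤ γ * (2 ^ m * binomialMass n x m) := by
        gcongr; exact binomialMass_two_mul_le n hx0 hx m
    _ ≤ γ * (1 / γ * binomialMass n x m) := by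
        gcongr; exact binomialMass_nonneg n hx0 (by linarith) m
    _ = binomialMass n x m := by field_simp

end Binomial

lemma pow_floor_logb_le {b y : ℝ} (hb : 1 < b) (hy : 1 ≤ y) : b ^ ⌊Real.logb b y⌋₊ ≤ y := by
  rw [← Real.rpow_natCast, ← Real.le_logb_iff_rpow_le hb (by linarith)]
  exact Nat.floor_le (Real.logb_nonneg hb hy)

lemma lt_pow_floor_logb_add_one {b y : ℝ} (hb : 1 < b) (hy : 0 < y) :
    y < b ^ (⌊Real.logb b y⌋₊ + 1) := by
  rw [← Real.rpow_natCast, ← Real.logb_lt_iff_lt_rpow hb hy, Nat.cast_add_one]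
  exact Nat.lt_floor_add_one _

lemma one_le_floor_logb {b y : ℝ} (hb : 1 < b) (hy : b ≤ y) : 1 ≤ ⌊Real.logb b y⌋₊ := by
  rw [Nat.one_le_floor_iff, Real.le_logb_iff_rpow_le hb (by linarith), Real.rpow_one]
  exact hy

theorem stmt_10_general (ℓ ℓs ℓt : ℕ) (hℓs : 1 ≤ ℓs)
    (hls : ℓs ≤ 2 * ℓ) (hlt : ℓt ≤ 2 * ℓ)
    (q γ : ℝ) (hq0 : 0 ≤ q) (hq : 16 * q * ℓ ^ 2 ≤ 1)
    (hγ0 : 0 < γ) (hγ : γ ≤ 1 / 2)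
    (m₀ : ℕ) (hm₀ : m₀ = ⌊Real.logb 2 (1 / γ)⌋₊)
    (n : ℕ) (hn : n = ℓs * ℓt)
    (P Q P' Q' : ℕ → ℝ) (a : ℝ)
    (hP : ∀ m, P m = (n.choose m : ℝ) * (2 * q) ^ m * (1 - 2 * q) ^ (n - m))
    (hQ : ∀ m, Q m = (n.choose m : ℝ) * q ^ m * (1 - q) ^ (n - m))
    (ha : a = ∑ m ∈ Finset.Ico (m₀ + 1) (n + 1), (P m - Q m / γ))
    (hP' : ∀ m, P' m =
      if m = 0 then P 0 + a else if m ≤ m₀ then P m else Q m / γ)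
    (hQ' : ∀ m, Q' m = (Q m - γ * P' m) / (1 - γ)) :
    (∀ m ≤ n, 0 ≤ P' m) ∧ (∀ m ≤ n, 0 ≤ Q' m) ∧
      (∑ m ∈ Finset.range (n + 1), P' m = 1) ∧
      (∑ m ∈ Finset.range (n + 1), Q' m = 1) ∧
      (1 / 2) * ∑ m ∈ Finset.range (n + 1), |P' m - P m|
        ≤ 4 * (8 * q * ℓ ^ 2) ^ (m₀ + 1) := by
  obtain rfl : P = binomialMass n (2 * q) := funext hP
  obtain rfl : Q = binomialMass n q := funext hQ
  obtain rfl : P' = replaceTail (binomialMass n (2 * q)) (binomialMass n q) γ m₀ n :=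
    funext fun m => by rw [hP', ha]; rfl
  set X := 8 * q * (ℓ : ℝ) ^ 2
  have hℓ : (1 : ℝ) ≤ ℓ := by exact_mod_cast (show 1 ≤ ℓ by omega)
  have hX0 : 0 ≤ X := by positivity
  have hX : X ≤ 1 / 2 := by linarith
  have hq2 : 2 * q ≤ 1 := by nlinarith
  have hnX : 2 * n * q ≤ X := by
    have : (n : ℝ) ≤ 4 * ℓ ^ 2 := by
      rw [hn]; exact_mod_cast (Nat.mul_le_mul hls hlt).trans_eq (by ring)
    nlinarith
  have hγ1 : (2 : ℝ) ≤ 1 / γ := by rw [le_div_iff₀ hγ0]; linarith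
  have hm₀1 : 1 ≤ m₀ := hm₀ ▸ one_le_floor_logb one_lt_two hγ1
  have hγm₀ : 2 ^ m₀ ≤ 1 / γ := hm₀ ▸ pow_floor_logb_le one_lt_two (by linarith)
  have hγm₀' : 1 / γ < 2 ^ (m₀ + 1) := hm₀ ▸ lt_pow_floor_logb_add_one one_lt_two (by positivity)
  have hP_nonneg := binomialMass_nonneg n (by positivity) hq2
  have hQ_nonneg := binomialMass_nonneg n hq0 (by linarith)
  have hPtail : ∑ m ∈ Ico (m₀ + 1) (n + 1), binomialMass n (2 * q) m ≤ 2 * X ^ (m₀ + 1) :=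
    (sum_Ico_binomialMass_le n (by positivity) hq2 (by linarith) _ _).trans (by gcongr; linarith)
  have hQtail : ∑ m ∈ Ico (m₀ + 1) (n + 1), binomialMass n q m / γ ≤ 2 * X ^ (m₀ + 1) :=
    (sum_Ico_binomialMass_div_le n hq0 (by linarith) (by linarith) hγ0 hγm₀'.le _).trans
      (by gcongr)
  have hXpow : X ^ (m₀ + 1) ≤ X ^ 2 := pow_le_pow_of_le_one hX0 (by linarith) (by omega)
  have hP0 := one_sub_mul_le_binomialMass_zero n (by linarith : 2 * q ≤ 2)
  have hQ0 := one_sub_mul_le_binomialMass_zero n (by linarith : q ≤ 2)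
  have hsumP' := (sum_replaceTail _ (binomialMass n q) γ m₀ n).trans (sum_binomialMass n (2 * q))
  refine ⟨fun m _ => replaceTail_nonneg m₀ n hP_nonneg hQ_nonneg hγ0.le (by nlinarith) m,
    fun m _ => ?_, hsumP', ?_, ?_⟩
  · refine hQ' m ▸ div_nonneg (sub_nonneg.2 ?_) (by linarith)
    refine mul_replaceTail_le m₀ n hP_nonneg (sum_binomialMass n _) hQ_nonneg hγ0 (by linarith)
      (fun k _ hk => mul_binomialMass_two_mul_le n hq0 hq2 hγ0
        ((pow_le_pow_right₀ one_le_two hk).trans hγm₀)) m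
  · simp_rw [hQ', ← sum_div, sum_sub_distrib, ← mul_sum, hsumP', sum_binomialMass, mul_one]
    exact div_self (by linarith)
  · linarith [sum_abs_replaceTail_sub_le_of_nonneg m₀ n hP_nonneg hQ_nonneg hγ0.le]

/-- Key lemma of the planted-clique reduction: the modified distributions `P'`
and `Q'` are well-defined pmfs on `{0,…,ℓsℓt}`, `(1-γ)Q' + γP' = Q`, and
`d_TV(P',P) ≤ 4(8qℓ²)^{m₀+1}`. -/
theorem stmt_10 (ℓ ℓs ℓt : ℕ) (hℓs : 1 ≤ ℓs) (hℓt : 1 ≤ ℓt)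
    (hls : ℓs ≤ 2 * ℓ) (hlt : ℓt ≤ 2 * ℓ)
    (q γ : ℝ) (hq0 : 0 ≤ q) (hq : 16 * q * ℓ ^ 2 ≤ 1)
    (hγ0 : 0 < γ) (hγ : γ ≤ 1 / 2)
    (m₀ : ℕ) (hm₀ : m₀ = ⌊Real.logb 2 (1 / γ)⌋₊)
    (n : ℕ) (hn : n = ℓs * ℓt)
    (P Q P' Q' : ℕ → ℝ) (a : ℝ)
    (hP : ∀ m, P m = (n.choose m : ℝ) * (2 * q) ^ m * (1 - 2 * q) ^ (n - m))
    (hQ : ∀ m, Q m = (n.choose m : ℝ) * q ^ m * (1 - q) ^ (n - m))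
    (ha : a = ∑ m ∈ Finset.Ico (m₀ + 1) (n + 1), (P m - Q m / γ))
    (hP' : ∀ m, P' m =
      if m = 0 then P 0 + a else if m ≤ m₀ then P m else Q m / γ)
    (hQ' : ∀ m, Q' m = (Q m - γ * P' m) / (1 - γ)) :
    (∀ m ≤ n, 0 ≤ P' m) ∧ (∀ m ≤ n, 0 ≤ Q' m) ∧
      (∑ m ∈ Finset.range (n + 1), P' m = 1) ∧
      (∑ m ∈ Finset.range (n + 1), Q' m = 1) ∧
      (1 / 2) * ∑ m ∈ Finset.range (n + 1), |P' m - P m|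
        ≤ 4 * (8 * q * ℓ ^ 2) ^ (m₀ + 1) :=
  stmt_10_general ℓ ℓs ℓt hℓs hls hlt q γ hq0 hq hγ0 hγ m₀ hm₀ n hn P Q P' Q' a hP hQ ha hP' hQ'
end

section
/- Let $p, m \in \mathbb{N}$ with $m \le p$, and let $H \sim \mathrm{Hypergeometric}(p, m, m)$ (the size of the intersection of two independent uniformly random $m$-subsets of a $p$-set). There exists a function $\tau: \mathbb{R}_+ \to \mathbb{R}_+$ with $\tau(b) \to 1$ as $b \to 0^+$ such that: for any $0 < b < 1/(16e)$ and $\lambda = b \min\{\frac{1}{m}\log\frac{ep}{m}, \frac{p^2}{m^4}\}$, $\mathbb{E}[\exp(\lambda H^2)] \le \tau(b)$. -/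
/-!
Write `μ = m²/p` for the mean of `H` and split the sum at `h = e² μ / b^(1/4)`. Below the
threshold `λ h² ≤ e⁴ √b`, because `λ μ² ≤ b`, so that part contributes at most `exp (e⁴ √b)`.
Above it, `P[H = h] ≤ (e μ / h)^h` and `e μ / h · exp (λ h) ≤ ε(b) := max (b^(1/4)) √(e³ b)`:
when `b h ≤ μ²` this follows from `λ h ≤ 1`. Otherwise `μ < √(b h)`, and `λ ≤ b log (e p / m) / m`
lets `exp (λ h)` absorb only a fraction `b h / m ≤ b` of the factor `m / p` in
`e μ / h = e (m / h) (m / p)`; what is left is `O(√b)` by `-x log x ≤ 1/e`. The tail is then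
geometric, and
`τ(b) = exp (e⁴ √b) + ε / (1 - ε) → 1`.
-/

open Finset Real

namespace Nat

theorem choose_le_exp_one_mul_div_pow (n k : ℕ) : (n.choose k : ℝ) ≤ (exp 1 * n / k) ^ k := by
  have hkk : (0 : ℝ) < (k : ℝ) ^ k := by exact_mod_cast Nat.pow_self_pos
  have hexp : (k : ℝ) ^ k / k ! ≤ exp k := Real.pow_div_factorial_le_exp _ (Nat.cast_nonneg k) k
  calc (n.choose k : ℝ) ≤ (n : ℝ) ^ k / k ! := Nat.choose_le_pow_div k n
    _ = (n : ℝ) ^ k * ((k : ℝ) ^ k / k !) / (k : ℝ) ^ k := by field_simp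
    _ ≤ (n : ℝ) ^ k * exp k / (k : ℝ) ^ k := by gcongr
    _ = (exp 1 * n / k) ^ k := by rw [div_pow, mul_pow, exp_one_pow, mul_comm]

theorem descFactorial_mul_pow_le {m p : ℕ} (hmp : m ≤ p) (k : ℕ) :
    m.descFactorial k * p ^ k ≤ p.descFactorial k * m ^ k := by
  induction k with
  | zero => simp
  | succ k ih =>
    have hstep : (m - k) * p ≤ (p - k) * m := by
      rw [Nat.sub_mul, Nat.sub_mul, Nat.mul_comm m p]
      exact Nat.sub_le_sub_left (Nat.mul_le_mul_left k hmp) _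
    calc m.descFactorial (k + 1) * p ^ (k + 1)
        = m.descFactorial k * p ^ k * ((m - k) * p) := by
          rw [Nat.descFactorial_succ, pow_succ]; ring
      _ ≤ p.descFactorial k * m ^ k * ((p - k) * m) := Nat.mul_le_mul ih hstep
      _ = p.descFactorial (k + 1) * m ^ (k + 1) := by
          rw [Nat.descFactorial_succ, pow_succ]; ring

theorem choose_mul_pow_le {m p : ℕ} (hmp : m ≤ p) (k : ℕ) :
    m.choose k * p ^ k ≤ p.choose k * m ^ k := by
  have h := descFactorial_mul_pow_le hmp k
  rw [descFactorial_eq_factorial_mul_choose, descFactorial_eq_factorial_mul_choose,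
    Nat.mul_assoc, Nat.mul_assoc] at h
  exact Nat.le_of_mul_le_mul_left h k.factorial_pos

theorem choose_sub_mul_choose_le {p m h : ℕ} (hhm : h ≤ m) :
    (p - m).choose (m - h) * p.choose h ≤ m.choose h * p.choose m :=
  calc (p - m).choose (m - h) * p.choose h ≤ (p - h).choose (m - h) * p.choose h :=
        Nat.mul_le_mul_right _ (Nat.choose_le_choose _ (Nat.sub_le_sub_left hhm p))
    _ = m.choose h * p.choose m := by rw [Nat.mul_comm, ← Nat.choose_mul hhm, Nat.mul_comm]

end Nat

theorem sum_le_add_geom {n : ℕ} {w g : ℕ → ℝ} {A ε : ℝ} (hw : ∀ h ∈ range (n + 1), 0 ≤ w h)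
    (hw1 : ∑ h ∈ range (n + 1), w h = 1) (hA : 0 ≤ A) (hε0 : 0 ≤ ε) (hε1 : ε < 1)
    (hg : ∀ h ∈ range (n + 1), g h ≤ w h * A ∨ (h ≠ 0 ∧ g h ≤ ε ^ h)) :
    ∑ h ∈ range (n + 1), g h ≤ A + ε / (1 - ε) := by
  have hpoint : ∀ h ∈ range (n + 1), g h ≤ w h * A + if h = 0 then 0 else ε ^ h := by
    intro h hh
    have := mul_nonneg (hw h hh) hA
    rcases hg h hh with hg | ⟨hh0, hg⟩
    · split_ifs <;> linarith [pow_nonneg hε0 h]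
    · rw [if_neg hh0]; linarith
  calc ∑ h ∈ range (n + 1), g h ≤ ∑ h ∈ range (n + 1), (w h * A + if h = 0 then 0 else ε ^ h) :=
        sum_le_sum hpoint
    _ = A + ε * ∑ i ∈ range n, ε ^ i := by
        rw [sum_add_distrib, ← sum_mul, hw1, one_mul, sum_range_succ', mul_sum]
        simp [pow_succ']
    _ ≤ A + ε * (1 / (1 - ε)) := by
        gcongr
        have := geom_sum_Ico_le_of_lt_one (m := 0) (n := n) hε0 hε1
        rwa [← range_eq_Ico, pow_zero] at this
    _ = A + ε / (1 - ε) := by ring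

theorem neg_mul_log_le_exp_neg_one {x : ℝ} (hx : 0 < x) : -(x * log x) ≤ exp (-1) := by
  simpa [exp_log hx, mul_comm] using mul_exp_neg_le_exp_neg_one (-log x)

noncomputable def hypergeomProb (p m h : ℕ) : ℝ :=
  ((m.choose h * (p - m).choose (m - h) : ℕ) : ℝ) / (p.choose m : ℝ)

theorem hypergeomProb_nonneg (p m h : ℕ) : 0 ≤ hypergeomProb p m h := by
  unfold hypergeomProb; positivity

theorem sum_hypergeomProb {p m : ℕ} (hmp : m ≤ p) :
    ∑ h ∈ range (m + 1), hypergeomProb p m h = 1 := by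
  have hvandermonde : ∑ h ∈ range (m + 1), m.choose h * (p - m).choose (m - h) = p.choose m := by
    rw [← Nat.sum_antidiagonal_eq_sum_range_succ_mk (fun ij => m.choose ij.1 * (p - m).choose ij.2),
      ← Nat.add_choose_eq, Nat.add_sub_cancel' hmp]
  have hpos : (p.choose m : ℝ) ≠ 0 := by exact_mod_cast (Nat.choose_pos hmp).ne'
  simp only [hypergeomProb, ← sum_div]
  rw [← Nat.cast_sum, hvandermonde, div_self hpos]

theorem hypergeomProb_le {p m h : ℕ} (hp : 0 < p) (hhm : h ≤ m) (hmp : m ≤ p) :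
    hypergeomProb p m h ≤ (exp 1 * ((m : ℝ) ^ 2 / p) / h) ^ h := by
  have hpm : (0 : ℝ) < p.choose m := by exact_mod_cast Nat.choose_pos hmp
  have hph : (0 : ℝ) < p.choose h := by exact_mod_cast Nat.choose_pos (hhm.trans hmp)
  have hsub : ((p - m).choose (m - h) : ℝ) / p.choose m ≤ (m.choose h : ℝ) / p.choose h := by
    rw [div_le_div_iff₀ hpm hph]
    exact_mod_cast Nat.choose_sub_mul_choose_le hhm
  have hratio : (m.choose h : ℝ) / p.choose h ≤ ((m : ℝ) / p) ^ h := by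
    refine div_le_of_le_mul₀ hph.le (by positivity) ?_
    rw [div_pow, div_mul_eq_mul_div, le_div_iff₀ (by positivity), mul_comm _ (p.choose h : ℝ)]
    exact_mod_cast Nat.choose_mul_pow_le hmp h
  calc hypergeomProb p m h = m.choose h * (((p - m).choose (m - h) : ℝ) / p.choose m) := by
        rw [hypergeomProb]; push_cast; ring
    _ ≤ (exp 1 * m / h) ^ h * ((m : ℝ) / p) ^ h :=
        mul_le_mul (Nat.choose_le_exp_one_mul_div_pow m h) (hsub.trans hratio)
          (by positivity) (by positivity)
    _ = (exp 1 * ((m : ℝ) ^ 2 / p) / h) ^ h := by rw [← mul_pow]; ring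

theorem bounds_of_eq_mul_min {M P b lam : ℝ} (hM : 0 < M) (hMP : M ≤ P) (hb : 0 ≤ b)
    (hlam : lam = b * min ((1 / M) * log (exp 1 * P / M)) (P ^ 2 / M ^ 4)) :
    0 ≤ lam ∧ lam * (M ^ 2 / P) ^ 2 ≤ b ∧ lam * M ≤ b * log (exp 1 * P / M) := by
  have hP : 0 < P := hM.trans_le hMP
  have hlog : 0 ≤ log (exp 1 * P / M) :=
    log_nonneg (by rw [le_div_iff₀ hM]; nlinarith [add_one_le_exp 1])
  refine ⟨?_, ?_, ?_⟩
  · rw [hlam]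
    exact mul_nonneg hb (le_min (mul_nonneg (by positivity) hlog) (by positivity))
  · calc lam * (M ^ 2 / P) ^ 2 ≤ b * (P ^ 2 / M ^ 4) * (M ^ 2 / P) ^ 2 := by
          rw [hlam]; gcongr; exact min_le_right _ _
      _ = b := by field_simp
  · calc lam * M ≤ b * ((1 / M) * log (exp 1 * P / M)) * M := by
          rw [hlam]; gcongr; exact min_le_left _ _
      _ = b * log (exp 1 * P / M) := by field_simp

theorem mul_sq_le_of_mul_le {μ b h lam : ℝ} (hb : 0 < b) (hlam0 : 0 ≤ lam)
    (hlam_mean : lam * μ ^ 2 ≤ b) (hh0 : 0 ≤ h) (hh : h * √√b ≤ exp 2 * μ) :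
    lam * h ^ 2 ≤ exp 4 * √b := by
  have hsb : 0 < √b := sqrt_pos.2 hb
  have hsq : h ^ 2 * √b ≤ exp 4 * μ ^ 2 := by
    have := pow_le_pow_left₀ (by positivity) hh 2
    rw [mul_pow, mul_pow, sq_sqrt hsb.le, ← exp_nat_mul] at this
    norm_num at this
    exact this
  refine le_of_mul_le_mul_right ?_ hsb
  calc lam * h ^ 2 * √b = lam * (h ^ 2 * √b) := by ring
    _ ≤ lam * (exp 4 * μ ^ 2) := by gcongr
    _ = exp 4 * (lam * μ ^ 2) := by ring
    _ ≤ exp 4 * b := by gcongr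
    _ = exp 4 * √b * √b := by rw [mul_assoc, mul_self_sqrt hb.le]

theorem mul_log_sub_two_log_le {M b h : ℝ} (hb : 0 ≤ b) (h1 : 1 ≤ h) (hM : 0 < M) :
    b * h / M * (log M - 2 * log h) ≤ b * exp (-1) := by
  have hx := neg_mul_log_le_exp_neg_one (show 0 < h ^ 2 / M by positivity)
  rw [log_div (by positivity) hM.ne', log_pow, Nat.cast_ofNat] at hx
  calc b * h / M * (log M - 2 * log h) = b / h * -(h ^ 2 / M * (2 * log h - log M)) := by
        field_simp; ring
    _ ≤ b / h * exp (-1) := by gcongr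
    _ ≤ b * exp (-1) := by gcongr; exact div_le_self hb h1

theorem log_tail_ratio_le {M P b h lam : ℝ} (hP : 0 < P) (h1 : 1 ≤ h) (hhM : h ≤ M)
    (hb : 0 < b) (hb6 : b ≤ 1 / 6) (hlam : lam * M ≤ b * log (exp 1 * P / M))
    (hmean : (M ^ 2 / P) ^ 2 < b * h) :
    log (exp 1 * (M ^ 2 / P) / h) + lam * h ≤ (3 + log b) / 2 := by
  have hh : 0 < h := by linarith
  have hM : 0 < M := by linarith
  set s := b * h / M with hs
  have hsb : s ≤ b := by rw [hs, div_le_iff₀ hM]; nlinarith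
  have hlog_ratio : log (exp 1 * (M ^ 2 / P) / h) = 1 + 2 * log M - log P - log h := by
    rw [log_div (by positivity) hh.ne', log_mul (exp_pos 1).ne' (by positivity), log_exp,
      log_div (by positivity) hP.ne', log_pow]
    push_cast; ring
  have hlam_h : lam * h ≤ s * (1 + log P - log M) := by
    have hlog : log (exp 1 * P / M) = 1 + log P - log M := by
      rw [log_div (by positivity) hM.ne', log_mul (exp_pos 1).ne' hP.ne', log_exp]
    have := mul_le_mul_of_nonneg_right hlam (div_nonneg hh.le hM.le)
    rw [hlog] at this
    calc lam * h = lam * M * (h / M) := by field_simp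
      _ ≤ _ := this
      _ = s * (1 + log P - log M) := by rw [hs]; ring
  -- `M²/P` is the mean of the hypergeometric law; here it is at most `√(b h)`
  have hlog_mean : 2 * (2 * log M - log P) < log b + log h := by
    have := log_lt_log (by positivity) hmean
    rwa [log_pow, log_div (by positivity) hP.ne', log_pow, log_mul hb.ne' hh.ne'] at this
  have hentropy_h : s * (log M - 2 * log h) ≤ b * exp (-1) :=
    mul_log_sub_two_log_le hb.le h1 hM
  have hentropy_b := neg_mul_log_le_exp_neg_one hb
  have hlogh : 0 ≤ log h := log_nonneg h1
  have hlogb : log b ≤ 0 := log_nonpos hb.le (by linarith)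
  have he : exp (-1) ≤ 1 / 2 := by
    rw [exp_neg, inv_le_comm₀ (exp_pos 1) (by norm_num)]
    linarith [add_one_le_exp 1]
  have hmean_s : (1 - s) * (2 * log M - log P) ≤ (1 - s) * ((log b + log h) / 2) :=
    mul_le_mul_of_nonneg_left (by linarith) (by linarith)
  have hlogh_s : (3 * s - 1) * log h ≤ 0 := mul_nonpos_of_nonpos_of_nonneg (by linarith) hlogh
  have hlogb_s : (b - s) * log b ≤ 0 := mul_nonpos_of_nonneg_of_nonpos (by linarith) hlogb
  have he_b : b * exp (-1) ≤ b / 2 := by nlinarith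
  rw [hlog_ratio]
  linarith

noncomputable def tailRate (b : ℝ) : ℝ := max √√b √(exp 3 * b)

noncomputable def tau (b : ℝ) : ℝ := exp (exp 4 * √b) + tailRate b / (1 - tailRate b)

theorem tailRate_nonneg (b : ℝ) : 0 ≤ tailRate b := le_max_of_le_left (sqrt_nonneg _)

theorem tailRate_lt_one {b : ℝ} (hb3 : exp 3 * b < 1) : tailRate b < 1 := by
  have hb1 : b < 1 := by nlinarith [add_one_le_exp 3]
  refine max_lt ?_ ?_
  · rw [sqrt_lt' one_pos, one_pow, sqrt_lt' one_pos, one_pow]; exact hb1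
  · rw [sqrt_lt' one_pos, one_pow]; exact hb3

theorem tendsto_tau : Filter.Tendsto tau (nhdsWithin 0 (Set.Ioi 0)) (nhds 1) := by
  have hrate : Continuous tailRate := by unfold tailRate; fun_prop
  have hrate0 : tailRate 0 = 0 := by simp [tailRate]
  have hcont : ContinuousAt tau 0 :=
    ((by fun_prop : Continuous fun b : ℝ => exp (exp 4 * √b)).continuousAt).add
      (hrate.continuousAt.div (continuous_const.sub hrate).continuousAt (by simp [hrate0]))
  have htau0 : tau 0 = 1 := by simp [tau, hrate0]
  simpa [htau0] using hcont.tendsto.mono_left nhdsWithin_le_nhds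

theorem tail_ratio_le {M P b h lam : ℝ} (hP : 0 < P) (h1 : 1 ≤ h) (hhM : h ≤ M)
    (hb : 0 < b) (hb6 : b ≤ 1 / 6) (hlam_mean : lam * (M ^ 2 / P) ^ 2 ≤ b)
    (hlam : lam * M ≤ b * log (exp 1 * P / M)) (hh : exp 2 * (M ^ 2 / P) < h * √√b) :
    exp 1 * (M ^ 2 / P) / h * exp (lam * h) ≤ tailRate b := by
  have hh0 : 0 < h := by linarith
  have hM : 0 < M := by linarith
  rcases le_or_gt (b * h) ((M ^ 2 / P) ^ 2) with hmean | hmean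
  · have hlam_h : lam * h ≤ 1 := by
      refine le_of_mul_le_mul_right ?_ (by positivity : 0 < (M ^ 2 / P) ^ 2)
      calc lam * h * (M ^ 2 / P) ^ 2 = lam * (M ^ 2 / P) ^ 2 * h := by ring
        _ ≤ b * h := by gcongr
        _ ≤ 1 * (M ^ 2 / P) ^ 2 := by linarith
    calc exp 1 * (M ^ 2 / P) / h * exp (lam * h) ≤ exp 1 * (M ^ 2 / P) / h * exp 1 := by
          gcongr
      _ = exp 2 * (M ^ 2 / P) / h := by rw [show (2 : ℝ) = 1 + 1 by norm_num, exp_add]; ring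
      _ ≤ √√b := by rw [div_le_iff₀ hh0]; linarith
      _ ≤ tailRate b := le_max_left _ _
  · have hpos : 0 < exp 1 * (M ^ 2 / P) / h := by positivity
    calc exp 1 * (M ^ 2 / P) / h * exp (lam * h)
        = exp (log (exp 1 * (M ^ 2 / P) / h) + lam * h) := by rw [exp_add, exp_log hpos]
      _ ≤ exp ((3 + log b) / 2) := exp_le_exp.2 (log_tail_ratio_le hP h1 hhM hb hb6 hlam hmean)
      _ = √(exp 3 * b) := by rw [exp_half, exp_add, exp_log hb]
      _ ≤ tailRate b := le_max_right _ _

theorem le_one_div_six_and_exp_three_mul_lt_one {b : ℝ} (hb : b < 1 / (16 * exp 1)) :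
    b ≤ 1 / 6 ∧ exp 3 * b < 1 := by
  have heb : exp 1 * b < 1 / 16 := by
    rw [lt_div_iff₀ (by positivity)] at hb; linarith
  have he2 : exp 2 < 16 := by
    rw [show (2 : ℝ) = 1 + 1 by norm_num, exp_add]; nlinarith [exp_one_lt_d9, exp_pos 1]
  refine ⟨by nlinarith [add_one_le_exp 1], ?_⟩
  rw [show (3 : ℝ) = 2 + 1 by norm_num, exp_add]; nlinarith [exp_pos 2]

theorem hypergeomProb_mul_exp_le {p m h : ℕ} {b lam : ℝ} (hhm : h ≤ m) (hmp : m ≤ p)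
    (hb : 0 < b) (hb6 : b ≤ 1 / 6) (hlam0 : 0 ≤ lam)
    (hlam_mean : lam * ((m : ℝ) ^ 2 / p) ^ 2 ≤ b)
    (hlam_log : lam * m ≤ b * log (exp 1 * p / m)) :
    hypergeomProb p m h * exp (lam * h ^ 2) ≤ hypergeomProb p m h * exp (exp 4 * √b) ∨
      (h ≠ 0 ∧ hypergeomProb p m h * exp (lam * h ^ 2) ≤ tailRate b ^ h) := by
  by_cases hsmall : (h : ℝ) * √√b ≤ exp 2 * ((m : ℝ) ^ 2 / p)
  · exact Or.inl (mul_le_mul_of_nonneg_left (exp_le_exp.2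
      (mul_sq_le_of_mul_le hb hlam0 hlam_mean (Nat.cast_nonneg h) hsmall))
      (hypergeomProb_nonneg p m h))
  rw [not_le] at hsmall
  have h1 : 1 ≤ h := by
    by_contra! h0
    have : exp 2 * ((m : ℝ) ^ 2 / p) < 0 := by simpa [Nat.lt_one_iff.mp h0] using hsmall
    exact this.not_ge (by positivity)
  have hP : (0 : ℝ) < p := by exact_mod_cast h1.trans (hhm.trans hmp)
  refine Or.inr ⟨by omega, ?_⟩
  calc hypergeomProb p m h * exp (lam * h ^ 2)
      ≤ (exp 1 * ((m : ℝ) ^ 2 / p) / h) ^ h * exp (lam * h ^ 2) := by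
        gcongr; exact hypergeomProb_le (by omega) hhm hmp
    _ = (exp 1 * ((m : ℝ) ^ 2 / p) / h * exp (lam * h)) ^ h := by
        rw [mul_pow, ← exp_nat_mul]; ring_nf
    _ ≤ tailRate b ^ h :=
        pow_le_pow_left₀ (by positivity) (tail_ratio_le hP (by exact_mod_cast h1)
          (by exact_mod_cast hhm) hb hb6 hlam_mean hlam_log hsmall) h

/-- Uniform exponential moment bound for the hypergeometric distribution
`H ~ Hypergeometric(p,m,m)`: there is `τ` with `τ(b) → 1` as `b → 0⁺` such
that `E[exp(λ H²)] ≤ τ(b)` whenever `0 < b < 1/(16e)` and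
`λ = b min{(1/m) log(ep/m), p²/m⁴}`. -/
theorem stmt_11 :
    ∃ τ : ℝ → ℝ,
      Filter.Tendsto τ (nhdsWithin 0 (Set.Ioi 0)) (nhds 1) ∧
      ∀ (p m : ℕ), 1 ≤ m → m ≤ p →
        ∀ b : ℝ, 0 < b → b < 1 / (16 * Real.exp 1) →
          ∀ lam : ℝ,
            lam = b * min ((1 / (m : ℝ)) * Real.log (Real.exp 1 * p / m))
              ((p : ℝ) ^ 2 / (m : ℝ) ^ 4) →
            ∑ h ∈ Finset.range (m + 1),
                ((m.choose h * (p - m).choose (m - h) : ℕ) : ℝ) /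
                    (p.choose m : ℝ) * Real.exp (lam * (h : ℝ) ^ 2)
              ≤ τ b := by
  refine ⟨tau, tendsto_tau, fun p m hm hmp b hb hb16 lam hlam => ?_⟩
  obtain ⟨hb6, hb3⟩ := le_one_div_six_and_exp_three_mul_lt_one hb16
  obtain ⟨hlam0, hlam_mean, hlam_log⟩ :=
    bounds_of_eq_mul_min (by exact_mod_cast hm) (by exact_mod_cast hmp) hb.le hlam
  exact sum_le_add_geom (fun h _ => hypergeomProb_nonneg p m h) (sum_hypergeomProb hmp)
    (exp_pos _).le (tailRate_nonneg b) (tailRate_lt_one hb3) fun h hh =>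
      hypergeomProb_mul_exp_le (Nat.lt_succ_iff.mp (mem_range.mp hh)) hmp hb hb6 hlam0
        hlam_mean hlam_log
end
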